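/- Define p2(v2, v3) = v2*(1 - v2) + v2*(v3 - v2) and p3(v2, v3) = v3*(1 - v3) + v3*(v2 - v3) (active power consumed at buses 2 and 3 of a resistive 3-bus network with unit admittances and slack voltage 1). Then at the point v2 = v3 = 1/2 the power vector is (1/4, 1/4), and there exists no (v2', v3') ∈ ℝ^2 with p2(v2', v3') ≥ 1/4, p3(v2', v3') ≥ 1/4, and at least one inequality strict. That is, (1/4, 1/4) is on the Pareto front (loadability boundary) of the feasible power region. -/
import Mathlib

/-- Active power consumed at bus 2 of the resistive 3-bus network. -/
noncomputable def p2 (v2 v3 : ℝ) : ℝ := v2 * (1 - v2) + v2 * (v3 - v2)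

/-- Active power consumed at bus 3 of the resistive 3-bus network. -/
noncomputable def p3 (v2 v3 : ℝ) : ℝ := v3 * (1 - v3) + v3 * (v2 - v3)

/-- The point `v2 = v3 = 1/2` gives power vector `(1/4, 1/4)`, which lies on the
Pareto front (loadability boundary): no operating point weakly dominates it with
at least one strict increase. -/
theorem stmt5 :
    p2 (1 / 2) (1 / 2) = 1 / 4 ∧ p3 (1 / 2) (1 / 2) = 1 / 4 ∧
    ¬∃ v2 v3 : ℝ, p2 v2 v3 ≥ 1 / 4 ∧ p3 v2 v3 ≥ 1 / 4 ∧
      (p2 v2 v3 > 1 / 4 ∨ p3 v2 v3 > 1 / 4) := by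
  refine ⟨by norm_num [p2], by norm_num [p3], ?_⟩
  rintro ⟨a, b, h2, h3, h⟩
  simp only [p2, p3] at h2 h3 h
  rcases h with h | h <;> nlinarith [sq_nonneg (a - b), sq_nonneg (a + b - 1), sq_nonneg (a - 1/2), sq_nonneg (b - 1/2)]
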